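/- The Lobachevsky function 𝓛(x) = -∫₀ˣ log|2 sin t| dt satisfies 𝓛(0) = 0, is odd (𝓛(-x) = -𝓛(x)), and is π-periodic: 𝓛(x + π) = 𝓛(x) for all real x. -/

import Mathlib

/-!
The integrand `log |2 sin t|` is even and `π`-periodic, so `𝓛` is odd, and `𝓛 (x + π) - 𝓛 x` is
minus the integral of the integrand over one period. That integral vanishes by Euler's
`∫₀^π log (sin t) dt = -π log 2`.
-/

open Real intervalIntegral

/-- The Lobachevsky function `𝓛(x) = -∫₀ˣ log|2 sin t| dt`. -/
noncomputable def lob (x : ℝ) : ℝ := -∫ t in (0 : ℝ)..x, Real.log |2 * Real.sin t|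

open MeasureTheory

lemma intervalIntegrable_log_abs_two_mul_sin (a b : ℝ) :
    IntervalIntegrable (fun t => log |2 * sin t|) volume a b :=
  (analyticOnNhd_const.mul analyticOnNhd_sin).meromorphicOn.intervalIntegrable_log_norm

lemma periodic_log_abs_two_mul_sin : Function.Periodic (fun t => log |2 * sin t|) π := by
  intro t
  simp only [sin_add_pi, mul_neg, abs_neg]

lemma integral_log_abs_two_mul_sin_zero_pi : ∫ t in 0..π, log |2 * sin t| = 0 := by
  have hsplit : ∀ᵐ t, t ∈ Set.uIoc 0 π → log |2 * sin t| = log 2 + log (sin t) := by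
    filter_upwards [Measure.ae_ne volume π] with t hπ ht
    rw [Set.uIoc_of_le pi_pos.le] at ht
    have hsin : 0 < sin t := sin_pos_of_pos_of_lt_pi ht.1 (lt_of_le_of_ne ht.2 hπ)
    rw [abs_of_pos (by positivity), log_mul two_ne_zero hsin.ne']
  rw [integral_congr_ae hsplit,
    integral_add (g := fun t => log (sin t)) intervalIntegrable_const intervalIntegrable_log_sin,
    intervalIntegral.integral_const, integral_log_sin_zero_pi]
  simp only [sub_zero, smul_eq_mul]
  ring

theorem lob_neg (x : ℝ) : lob (-x) = -lob x := by
  have heven : ∫ t in 0..-x, log |2 * sin t| = ∫ t in 0..-x, log |2 * sin (-t)| := by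
    simp only [sin_neg, mul_neg, abs_neg]
  rw [lob, lob, heven, integral_comp_neg (fun t => log |2 * sin t|), neg_zero, neg_neg,
    integral_symm]

theorem lob_add_pi (x : ℝ) : lob (x + π) = lob x := by
  rw [lob, lob, periodic_log_abs_two_mul_sin.intervalIntegral_add_eq_add 0 x
    intervalIntegrable_log_abs_two_mul_sin, zero_add, integral_log_abs_two_mul_sin_zero_pi,
    add_zero]

/-- The Lobachevsky function vanishes at `0`, is odd, and is `π`-periodic. -/
theorem lob_zero_odd_periodic :
    lob 0 = 0 ∧ (∀ x : ℝ, lob (-x) = -lob x) ∧ (∀ x : ℝ, lob (x + π) = lob x) :=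
  ⟨by rw [lob, integral_same, neg_zero], lob_neg, lob_add_pi⟩
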